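/- arXiv:1404.7491 — 6 statements merged into one kernel-verified Lean document; each statement's English description precedes it below -/
import Mathlib

section
/- For every nonnegative integer x and complex z with |z| < 1 and |z/c| < 1, the generating function identity (1−z)^{−α} · ((1 − z/c)/(1 − z))^x = Σ_{m≥0} ((α)_m/m!) · M_m(x; α, c) · z^m holds, with the series converging absolutely. -/
/-!
Since `(α)_m / (α)_k = (α + k)_{m - k}`, the coefficient of `z^m` in the series is
`∑_{k ≤ x} C(x, k) (1 - 1/c)^k (α + k)_{m-k} / (m - k)!`. Summing over `m` first, the `k`-th
term contributes `C(x, k) ((1 - 1/c) z)^k (1 - z)^{-(α + k)}` by the binomial series, and the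
binomial theorem collects these finitely many terms into
`(1 - z)^{-α} (1 + (1 - 1/c) z / (1 - z))^x = (1 - z)^{-α} ((1 - z/c) / (1 - z))^x`.
-/

open Complex

/-- Complex Pochhammer symbol. -/
noncomputable def pochC (α : ℂ) (k : ℕ) : ℂ := ∏ i ∈ Finset.range k, (α + i)

/-- One-variable Meixner polynomial (complex parameters). -/
noncomputable def MeixnerC (m x : ℕ) (α c : ℂ) : ℂ :=
  ∑ k ∈ Finset.range (m + 1),
    ((k.factorial : ℂ) / pochC α k) * (m.choose k) * (x.choose k) * (1 - 1 / c) ^ k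

open Finset

lemma pochC_add (a : ℂ) (k j : ℕ) : pochC a (k + j) = pochC a k * pochC (a + k) j := by
  simp only [pochC, prod_range_add, Nat.cast_add, add_assoc]

lemma pochC_ne_zero {a : ℂ} (ha : ∀ i : ℕ, a + i ≠ 0) (n : ℕ) : pochC a n ≠ 0 :=
  prod_ne_zero_iff.mpr fun i _ ↦ ha i

lemma pochC_eq_ascPochhammer_eval (a : ℂ) (n : ℕ) : pochC a n = (ascPochhammer ℂ n).eval a := by
  induction n with
  | zero => simp [pochC]
  | succ n ih => rw [pochC, prod_range_succ, ← pochC, ih, ascPochhammer_succ_eval]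

lemma ringChoose_eq_pochC_div_factorial (a : ℂ) (n : ℕ) :
    Ring.choose (a + n - 1) n = pochC a n / n.factorial := by
  rw [← Ring.multichoose_eq, eq_div_iff (by simp [Nat.factorial_ne_zero]), mul_comm,
    ← nsmul_eq_mul, Ring.factorial_nsmul_multichoose_eq_ascPochhammer,
    Polynomial.ascPochhammer_smeval_eq_eval, pochC_eq_ascPochhammer_eval]

lemma hasFPowerSeriesOnBall_one_sub_cpow_neg (a : ℂ) :
    HasFPowerSeriesOnBall (fun z ↦ (1 - z) ^ (-a))
      (.ofScalars ℂ fun n ↦ pochC a n / n.factorial) 0 1 := by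
  have h := one_div_one_sub_cpow_hasFPowerSeriesOnBall_zero a
  simp only [ringChoose_eq_pochC_div_factorial] at h
  exact h.congr fun z _ ↦ by simp [cpow_neg]

lemma mem_eball_zero_one_of_norm_lt_one {z : ℂ} (hz : ‖z‖ < 1) : z ∈ Metric.eball (0 : ℂ) 1 := by
  rw [← ENNReal.ofReal_one, Metric.eball_ofReal]
  simpa using hz

lemma hasSum_pochC_div_factorial_mul_pow (a : ℂ) {z : ℂ} (hz : ‖z‖ < 1) :
    HasSum (fun n ↦ pochC a n / n.factorial * z ^ n) ((1 - z) ^ (-a)) := by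
  simp_rw [mul_comm _ (z ^ _)]
  simpa [FormalMultilinearSeries.ofScalars_apply_eq] using
    (hasFPowerSeriesOnBall_one_sub_cpow_neg a).hasSum (mem_eball_zero_one_of_norm_lt_one hz)

lemma summable_norm_pochC_div_factorial_mul_pow (a : ℂ) {z : ℂ} (hz : ‖z‖ < 1) :
    Summable (fun n ↦ ‖pochC a n / n.factorial * z ^ n‖) := by
  have hf := hasFPowerSeriesOnBall_one_sub_cpow_neg a
  simp_rw [mul_comm _ (z ^ _)]
  simpa [FormalMultilinearSeries.ofScalars_apply_eq] using
    FormalMultilinearSeries.summable_norm_apply _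
      (Metric.eball_subset_eball hf.r_le (mem_eball_zero_one_of_norm_lt_one hz))

lemma pochC_div_factorial_mul_factorial_div_pochC_mul_choose {a : ℂ} {k m : ℕ}
    (ha : pochC a k ≠ 0) (hkm : k ≤ m) :
    pochC a m / m.factorial * (k.factorial / pochC a k * m.choose k) =
      pochC (a + k) (m - k) / (m - k).factorial := by
  obtain ⟨j, rfl⟩ := Nat.exists_eq_add_of_le hkm
  have hfact : ((k + j).choose k * k.factorial * j.factorial : ℂ) = (k + j).factorial := by
    simpa using congrArg (Nat.cast (R := ℂ)) (Nat.choose_mul_factorial_mul_factorial hkm)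
  have hchoose : ((k + j).choose k : ℂ) ≠ 0 := by exact_mod_cast (Nat.choose_pos hkm).ne'
  have hkfact : (k.factorial : ℂ) ≠ 0 := by exact_mod_cast k.factorial_ne_zero
  rw [pochC_add, Nat.add_sub_cancel_left, ← hfact]
  field_simp

lemma sum_range_succ_eq_sum_range_succ_of_eq_zero {M : Type*} [AddCommMonoid M] {f : ℕ → M}
    {m x : ℕ} (hf : ∀ k, min m x < k → f k = 0) :
    ∑ k ∈ range (m + 1), f k = ∑ k ∈ range (x + 1), f k := by
  rcases le_total m x with h | h
  · refine sum_subset (range_subset_range.mpr (by omega)) fun k _ hk ↦ hf k ?_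
    simp only [mem_range, not_lt] at hk
    omega
  · refine (sum_subset (range_subset_range.mpr (by omega)) fun k _ hk ↦ hf k ?_).symm
    simp only [mem_range, not_lt] at hk
    omega

lemma pochC_div_factorial_mul_meixnerC {a : ℂ} (ha : ∀ i : ℕ, a + i ≠ 0) (c : ℂ) (m x : ℕ) :
    pochC a m / m.factorial * MeixnerC m x a c =
      ∑ k ∈ range (x + 1), x.choose k * (1 - 1 / c) ^ k *
        if k ≤ m then pochC (a + k) (m - k) / (m - k).factorial else 0 := by
  rw [MeixnerC, sum_range_succ_eq_sum_range_succ_of_eq_zero (x := x), mul_sum]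
  · refine sum_congr rfl fun k _ ↦ ?_
    split_ifs with hkm
    · rw [← pochC_div_factorial_mul_factorial_div_pochC_mul_choose (pochC_ne_zero ha k) hkm]
      ring
    · simp [Nat.choose_eq_zero_of_lt (not_le.mp hkm)]
  · intro k hk
    rcases min_lt_iff.mp hk with hk | hk <;> simp [Nat.choose_eq_zero_of_lt hk]

lemma pochC_div_factorial_mul_meixnerC_mul_pow {a : ℂ} (ha : ∀ i : ℕ, a + i ≠ 0) (c z : ℂ)
    (m x : ℕ) :
    pochC a m / m.factorial * MeixnerC m x a c * z ^ m =
      ∑ k ∈ range (x + 1), x.choose k * ((1 - 1 / c) * z) ^ k *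
        if k ≤ m then pochC (a + k) (m - k) / (m - k).factorial * z ^ (m - k) else 0 := by
  rw [pochC_div_factorial_mul_meixnerC ha, sum_mul]
  refine sum_congr rfl fun k _ ↦ ?_
  split_ifs with hkm
  · rw [mul_pow, ← pow_mul_pow_sub z hkm]
    ring
  · simp

lemma hasSum_ite_le_sub {M : Type*} [AddCommMonoid M] [TopologicalSpace M] {g : ℕ → M} {s : M}
    (k : ℕ) (h : HasSum g s) : HasSum (fun m ↦ if k ≤ m then g (m - k) else 0) s := by
  refine ((add_left_injective k).hasSum_iff fun m hm ↦ ?_).mp ?_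
  · rw [if_neg]
    rintro hkm
    exact hm ⟨m - k, Nat.sub_add_cancel hkm⟩
  · simpa [Function.comp_def] using h

lemma sum_choose_mul_pow_mul_cpow_neg {z : ℂ} (hz : z ≠ 1) (a u : ℂ) (x : ℕ) :
    ∑ k ∈ range (x + 1), x.choose k * u ^ k * (1 - z) ^ (-(a + k)) =
      (1 - z) ^ (-a) * ((1 - z + u) / (1 - z)) ^ x := by
  have hz' : 1 - z ≠ 0 := sub_ne_zero.mpr hz.symm
  have hpow (k : ℕ) : (1 - z) ^ (-(a + k)) = (1 - z) ^ (-a) * ((1 - z) ^ k)⁻¹ := by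
    rw [neg_add, cpow_add _ _ hz', cpow_neg _ (k : ℂ), cpow_natCast]
  rw [add_div, div_self hz', add_comm 1 (u / (1 - z)), add_pow, mul_sum]
  refine sum_congr rfl fun k _ ↦ ?_
  rw [hpow, div_pow, one_pow, mul_one]
  field_simp

theorem meixner_generating_function_general (α : ℝ) (hα : ∀ k : ℕ, α ≠ -(k : ℝ))
    (c : ℂ) (x : ℕ) (z : ℂ) (hz : ‖z‖ < 1) :
    HasSum (fun m : ℕ => (pochC (α : ℂ) m / (m.factorial : ℂ)) * MeixnerC m x (α : ℂ) c * z ^ m)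
      ((1 - z) ^ (-(α : ℂ)) * (((1 - z / c) / (1 - z)) ^ x)) ∧
    Summable (fun m : ℕ =>
      ‖(pochC (α : ℂ) m / (m.factorial : ℂ)) * MeixnerC m x (α : ℂ) c * z ^ m‖) := by
  have ha (i : ℕ) : (α : ℂ) + i ≠ 0 := fun h ↦ hα i (by exact_mod_cast eq_neg_of_add_eq_zero_left h)
  simp_rw [pochC_div_factorial_mul_meixnerC_mul_pow ha]
  constructor
  · have hz1 : z ≠ 1 := by rintro rfl; simp at hz
    have hval := sum_choose_mul_pow_mul_cpow_neg hz1 α ((1 - 1 / c) * z) x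
    rw [show 1 - z + (1 - 1 / c) * z = 1 - z / c by ring] at hval
    rw [← hval]
    exact hasSum_sum fun k _ ↦
      (hasSum_ite_le_sub k (hasSum_pochC_div_factorial_mul_pow (α + k) hz)).mul_left _
  · refine .of_nonneg_of_le (fun _ ↦ norm_nonneg _) (fun m ↦ norm_sum_le _ _)
      (summable_sum fun k _ ↦ ?_)
    simp_rw [norm_mul]
    refine .mul_left _ ((hasSum_ite_le_sub k
      (summable_norm_pochC_div_factorial_mul_pow (α + k) hz).hasSum).summable.congr fun m ↦ ?_)
    split_ifs <;> simp

theorem meixner_generating_function (α : ℝ) (hα : ∀ k : ℕ, α ≠ -(k : ℝ))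
    (c : ℂ) (hc : c ≠ 0) (x : ℕ) (z : ℂ) (hz : ‖z‖ < 1) (hzc : ‖z / c‖ < 1) :
    HasSum (fun m : ℕ => (pochC (α : ℂ) m / (m.factorial : ℂ)) * MeixnerC m x (α : ℂ) c * z ^ m)
      ((1 - z) ^ (-(α : ℂ)) * (((1 - z / c) / (1 - z)) ^ x)) ∧
    Summable (fun m : ℕ =>
      ‖(pochC (α : ℂ) m / (m.factorial : ℂ)) * MeixnerC m x (α : ℂ) c * z ^ m‖) :=
  meixner_generating_function_general α hα c x z hz
end

section
/- For every nonnegative integer x, nonzero parameter a, and complex z, the generating function identity e^z · (1 − z/a)^x = Σ_{m≥0} (1/m!) · C_m(x; a) · z^m holds, with the series converging absolutely for all z. -/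
/-!
The exponential series `e^z = ∑ zⁿ/n!` and the binomial expansion
`(1 - z/a)^x = ∑ₖ C(x,k) (-z/a)^k`, which is a finite sum, both converge absolutely, so their
Cauchy product converges absolutely to `e^z (1 - z/a)^x`. Its `m`-th term is
`∑ₖ C(x,k) (-1/a)^k zᵐ/(m-k)!`, and `m!/(m-k)! = k! C(m,k)` turns this into `C_m(x; a) zᵐ/m!`.
-/

open Complex

/-- One-variable Charlier polynomial (complex parameter). -/
noncomputable def CharlierC (m x : ℕ) (a : ℂ) : ℂ :=
  ∑ k ∈ Finset.range (m + 1),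
    (k.factorial : ℂ) * (m.choose k) * (x.choose k) * (-1 / a) ^ k

open Finset Nat

section Binomial

variable {R : Type*} (n : ℕ)

lemma choose_mul_pow_eq_zero_of_lt [Semiring R] {k : ℕ} (h : n < k) (w : R) :
    (n.choose k : R) * w ^ k = 0 := by
  simp [choose_eq_zero_of_lt h]

lemma hasSum_choose_mul_pow [Semiring R] [TopologicalSpace R] (w : R) :
    HasSum (fun k ↦ (n.choose k : R) * w ^ k) ((1 + w) ^ n) := by
  rw [add_comm, (Commute.one_right w).add_pow]
  simp only [one_pow, mul_one, ← Nat.cast_comm]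
  exact hasSum_sum_of_ne_finset_zero fun k hk ↦
    choose_mul_pow_eq_zero_of_lt n (by simpa using hk) w

lemma summable_norm_choose_mul_pow [SeminormedRing R] (w : R) :
    Summable fun k ↦ ‖(n.choose k : R) * w ^ k‖ :=
  summable_of_ne_finset_zero (s := range (n + 1)) fun k hk ↦ by
    rw [choose_mul_pow_eq_zero_of_lt n (by simpa using hk) w, norm_zero]

end Binomial

lemma one_div_factorial_mul_charlierC_mul_pow (m x : ℕ) (a z : ℂ) :
    1 / (m ! : ℂ) * CharlierC m x a * z ^ m =
      ∑ k ∈ range (m + 1), (x.choose k : ℂ) * (-z / a) ^ k * (z ^ (m - k) / (m - k)!) := by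
  rw [CharlierC, mul_sum, sum_mul]
  refine sum_congr rfl fun k hk ↦ ?_
  have hkm : k ≤ m := by simpa [Nat.lt_succ_iff] using hk
  rw [← pow_mul_pow_sub z hkm, Nat.cast_choose ℂ hkm]
  have := m.factorial_ne_zero
  have := k.factorial_ne_zero
  field_simp
  ring

theorem charlier_generating_function_general (x : ℕ) (a : ℂ) (z : ℂ) :
    HasSum (fun m : ℕ => (1 / (m.factorial : ℂ)) * CharlierC m x a * z ^ m)
      (Complex.exp z * (1 - z / a) ^ x) ∧
    Summable (fun m : ℕ => ‖(1 / (m.factorial : ℂ)) * CharlierC m x a * z ^ m‖) := by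
  have hbinom := summable_norm_choose_mul_pow x (-z / a)
  have hexp := NormedSpace.norm_expSeries_div_summable z
  have hprod := hasSum_sum_range_mul_of_summable_norm hbinom hexp
  rw [(hasSum_choose_mul_pow x _).tsum_eq, (NormedSpace.expSeries_div_hasSum_exp z).tsum_eq,
    ← exp_eq_exp_ℂ, mul_comm] at hprod
  rw [sub_eq_add_neg, ← neg_div]
  simp only [one_div_factorial_mul_charlierC_mul_pow]
  exact ⟨hprod, (summable_norm_sum_mul_range_of_summable_norm hbinom hexp :)⟩

theorem charlier_generating_function (x : ℕ) (a : ℂ) (ha : a ≠ 0) (z : ℂ) :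
    HasSum (fun m : ℕ => (1 / (m.factorial : ℂ)) * CharlierC m x a * z ^ m)
      (Complex.exp z * (1 - z / a) ^ x) ∧
    Summable (fun m : ℕ => ‖(1 / (m.factorial : ℂ)) * CharlierC m x a * z ^ m‖) :=
  charlier_generating_function_general x a z
end

section
/- For a > 0 and nonnegative integers m, n, the orthogonality relation Σ_{x≥0} (a^x/x!) · C_m(x; a) · C_n(x; a) = a^{−m} · e^a · m! · δ_{m,n} holds, with the series converging absolutely. -/
noncomputable def Charlier (m x : ℕ) (a : ℝ) : ℝ :=
  ∑ k ∈ Finset.range (m + 1),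
    (k.factorial : ℝ) * (m.choose k) * (x.choose k) * (-1 / a) ^ k

/-!
Write `w x = aˣ / x!`. Shifting the index gives
`∑ₓ w x * C(x, j) * f x = aʲ / j! * ∑_y w y * f (y + j)`.
By the binomial theorem `∑_y w y * C_n(y) = eᵃ δ_{n,0}`, and the difference equation
`C_{n+1}(x+1) = C_{n+1}(x) - (n+1)/a * C_n(x)` then gives, by induction on `j`,
`∑_y w y * C_n(y + j) = eᵃ n! (-1/a)ⁿ C(j, n)`. Hence `∑ₓ w x * C(x, k) * C_m(x)` vanishes for
`k < m`, so expanding `C_n` in the basis `C(x, k)` for `n ≤ m` leaves only the term `k = n = m`.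
Absolute convergence is free: summable real series are absolutely summable.
-/

open Finset Real
open scoped Nat

theorem hasSum_pow_div_factorial (a : ℝ) : HasSum (fun x : ℕ => a ^ x / x !) (exp a) := by
  rw [exp_eq_exp_ℝ]
  exact NormedSpace.expSeries_div_hasSum_exp a

theorem pow_div_factorial_mul_choose (a : ℝ) (y j : ℕ) :
    a ^ (y + j) / (y + j)! * (y + j).choose j = a ^ j / j ! * (a ^ y / y !) := by
  rw [← Nat.add_choose_mul_factorial_mul_factorial y j]
  have hchoose : ((y + j).choose j : ℝ) ≠ 0 := by
    exact_mod_cast (Nat.choose_pos (Nat.le_add_left j y)).ne'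
  push_cast
  field_simp
  ring

theorem HasSum.pow_div_factorial_mul_choose_mul {a : ℝ} {f : ℕ → ℝ} {s : ℝ} {j : ℕ}
    (hf : HasSum (fun y => a ^ y / y ! * f (y + j)) s) :
    HasSum (fun x => a ^ x / x ! * x.choose j * f x) (a ^ j / j ! * s) := by
  rw [← hasSum_nat_add_iff' j]
  have hlow : ∑ x ∈ range j, a ^ x / x ! * x.choose j * f x = 0 :=
    sum_eq_zero fun x hx => by simp [Nat.choose_eq_zero_of_lt (mem_range.mp hx)]
  rw [hlow, sub_zero]
  simpa only [pow_div_factorial_mul_choose, mul_assoc] using hf.mul_left (a ^ j / j !)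

theorem hasSum_pow_div_factorial_mul_choose (a : ℝ) (j : ℕ) :
    HasSum (fun x => a ^ x / x ! * x.choose j) (a ^ j / j ! * exp a) := by
  simpa using HasSum.pow_div_factorial_mul_choose_mul (f := fun _ => 1) (j := j)
    (by simpa using hasSum_pow_div_factorial a)

theorem charlier_zero_left (x : ℕ) (a : ℝ) : Charlier 0 x a = 1 := by
  simp [Charlier]

theorem charlier_succ_add_one (n x : ℕ) (a : ℝ) :
    Charlier (n + 1) (x + 1) a = Charlier (n + 1) x a - (n + 1) / a * Charlier n x a := by
  have hcoeff (k : ℕ) :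
      ((k + 1)! * (n + 1).choose (k + 1) : ℝ) = (n + 1) * (k ! * n.choose k) := by
    have h : ((n + 1).choose (k + 1) * (k + 1) : ℝ) = (n + 1) * n.choose k := by
      exact_mod_cast (Nat.add_one_mul_choose_eq n k).symm
    rw [Nat.factorial_succ]
    push_cast
    linear_combination (k ! : ℝ) * h
  have hterm (k : ℕ) :
      ((k + 1)! * (n + 1).choose (k + 1) * (x + 1).choose (k + 1) * (-1 / a) ^ (k + 1) : ℝ)
        = (k + 1)! * (n + 1).choose (k + 1) * x.choose (k + 1) * (-1 / a) ^ (k + 1)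
          - (n + 1) / a * (k ! * n.choose k * x.choose k * (-1 / a) ^ k) := by
    rw [Nat.choose_succ_succ' x, Nat.cast_add]
    linear_combination (x.choose k * (-1 / a) ^ (k + 1) : ℝ) * hcoeff k
  rw [Charlier, sum_range_succ', sum_congr rfl fun k _ => hterm k, sum_sub_distrib, Charlier,
    sum_range_succ' _ (n + 1), Charlier, mul_sum]
  simp only [Nat.choose_zero_right]
  ring

theorem hasSum_pow_div_factorial_mul_charlier {a : ℝ} (ha : a ≠ 0) (n : ℕ) :
    HasSum (fun x => a ^ x / x ! * Charlier n x a) (if n = 0 then exp a else 0) := by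
  have h := hasSum_sum fun k (_ : k ∈ range (n + 1)) =>
    (hasSum_pow_div_factorial_mul_choose a k).mul_left (k ! * n.choose k * (-1 / a) ^ k)
  have hterm (k : ℕ) : (k ! * n.choose k * (-1 / a) ^ k * (a ^ k / k ! * exp a) : ℝ)
      = exp a * ((-1) ^ k * n.choose k) := by
    rw [div_pow]
    field_simp
  have halt : (∑ k ∈ range (n + 1), ((-1) ^ k * n.choose k : ℝ)) = if n = 0 then 1 else 0 :=
    mod_cast Int.alternating_sum_range_choose
  rw [sum_congr rfl fun k _ => hterm k, ← mul_sum, halt, mul_ite, mul_one, mul_zero] at h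
  refine h.congr_fun fun x => ?_
  simp only [Charlier, mul_sum]
  exact sum_congr rfl fun k _ => by ring

theorem hasSum_pow_div_factorial_mul_charlier_add {a : ℝ} (ha : a ≠ 0) (n j : ℕ) :
    HasSum (fun y => a ^ y / y ! * Charlier n (y + j) a)
      (exp a * n ! * (-1 / a) ^ n * j.choose n) := by
  induction j generalizing n with
  | zero =>
    have hval : exp a * n ! * (-1 / a) ^ n * Nat.choose 0 n = if n = 0 then exp a else 0 := by
      cases n <;> simp
    simpa [hval] using hasSum_pow_div_factorial_mul_charlier ha n
  | succ j ih =>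
    cases n with
    | zero => simpa [charlier_zero_left] using hasSum_pow_div_factorial a
    | succ n =>
      have h := (ih (n + 1)).sub ((ih n).mul_left ((n + 1) / a))
      have hval : exp a * (n + 1)! * (-1 / a) ^ (n + 1) * (j + 1).choose (n + 1)
          = exp a * (n + 1)! * (-1 / a) ^ (n + 1) * j.choose (n + 1)
            - (n + 1) / a * (exp a * n ! * (-1 / a) ^ n * j.choose n) := by
        rw [Nat.choose_succ_succ', Nat.factorial_succ]
        push_cast
        ring
      rw [hval]
      refine h.congr_fun fun y => ?_
      rw [← add_assoc, charlier_succ_add_one]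
      ring

theorem hasSum_charlier_mul_charlier_of_le {a : ℝ} (ha : a ≠ 0) {m n : ℕ} (hnm : n ≤ m) :
    HasSum (fun x => a ^ x / x ! * Charlier m x a * Charlier n x a)
      (if m = n then (a ^ m)⁻¹ * exp a * m ! else 0) := by
  have h := hasSum_sum fun k (_ : k ∈ range (n + 1)) =>
    (HasSum.pow_div_factorial_mul_choose_mul (f := fun x => Charlier m x a)
      (hasSum_pow_div_factorial_mul_charlier_add ha m k)).mul_left (k ! * n.choose k * (-1 / a) ^ k)
  have hlow : ∀ k ∈ range n, (k ! * n.choose k * (-1 / a) ^ k *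
      (a ^ k / k ! * (exp a * m ! * (-1 / a) ^ m * k.choose m)) : ℝ) = 0 := fun k hk => by
    rw [Nat.choose_eq_zero_of_lt ((mem_range.mp hk).trans_le hnm)]
    simp
  have hval : (n ! * n.choose n * (-1 / a) ^ n *
      (a ^ n / n ! * (exp a * m ! * (-1 / a) ^ m * n.choose m)) : ℝ)
        = if m = n then (a ^ m)⁻¹ * exp a * m ! else 0 := by
    rcases hnm.eq_or_lt with rfl | hlt
    · have hsq : (-1 / a) ^ n * (-1 / a) ^ n * a ^ n = (a ^ n)⁻¹ := by
        rw [← mul_pow, ← mul_pow, ← inv_pow]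
        congr 1
        field_simp
      rw [if_pos rfl, Nat.choose_self, Nat.cast_one, ← hsq]
      field_simp
    · simp [hlt.ne', Nat.choose_eq_zero_of_lt hlt]
  rw [sum_range_succ, sum_eq_zero hlow, zero_add, hval] at h
  refine h.congr_fun fun x => ?_
  rw [Charlier.eq_1 n, mul_sum]
  exact sum_congr rfl fun k _ => by ring

theorem charlier_orthogonality (a : ℝ) (ha : 0 < a) (m n : ℕ) :
    HasSum (fun x : ℕ =>
        (a ^ x / (x.factorial : ℝ)) * Charlier m x a * Charlier n x a)
      (if m = n then (a ^ m)⁻¹ * Real.exp a * (m.factorial : ℝ) else 0) ∧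
    Summable (fun x : ℕ =>
      |(a ^ x / (x.factorial : ℝ)) * Charlier m x a * Charlier n x a|) := by
  have h : HasSum (fun x : ℕ => a ^ x / x ! * Charlier m x a * Charlier n x a)
      (if m = n then (a ^ m)⁻¹ * exp a * m ! else 0) := by
    rcases le_total n m with hnm | hmn
    · exact hasSum_charlier_mul_charlier_of_le ha.ne' hnm
    · convert hasSum_charlier_mul_charlier_of_le ha.ne' hmn using 1
      · ext x
        ring
      · rcases eq_or_ne m n with rfl | hne
        · rfl
        · simp [hne, hne.symm]
  exact ⟨h, h.summable.abs⟩
end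

section
/- For all nonnegative integers m and x, the Meixner polynomial satisfies the difference equation (c−1)·m·M_m(x; α, c) = c·(x+α)·M_m(x+1; α, c) − (x + (x+α)·c)·M_m(x; α, c) + x·M_m(x−1; α, c), where the last term is interpreted as 0 when x = 0. -/
/-!
Expand `M_m(x) = ∑ₖ aₖ C(x,k)`. The difference operator on the right-hand side kills `C(x,0)` and
sends `C(x,k+1)` to `(c-1)(k+1) C(x,k+1) + c(α+k) C(x,k)`. The coefficients satisfy
`c(α+k) a_{k+1} = (c-1)(m-k) aₖ`, so the second parts shift down one index and the total is
`(c-1) ∑ₖ (k + (m-k)) aₖ C(x,k) = (c-1) m M_m(x)`.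
-/

noncomputable def poch (α : ℝ) (k : ℕ) : ℝ := ∏ i ∈ Finset.range k, (α + i)

noncomputable def Meixner (m x : ℕ) (α c : ℝ) : ℝ :=
  ∑ k ∈ Finset.range (m + 1),
    ((k.factorial : ℝ) / poch α k) * (m.choose k) * (x.choose k) * (1 - 1 / c) ^ k

open Finset

section Binomial

variable {R : Type*} [CommRing R]

theorem Nat.cast_sub_mul_choose (n k : ℕ) :
    ((n : R) - k) * n.choose k = (k + 1) * n.choose (k + 1) := by
  rcases le_or_gt k n with hkn | hnk
  · have h := congrArg (Nat.cast (R := R)) (Nat.choose_succ_right_eq n k)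
    push_cast [Nat.cast_sub hkn] at h
    linear_combination -h
  · simp [Nat.choose_eq_zero_of_lt hnk, Nat.choose_eq_zero_of_lt (hnk.trans (Nat.lt_succ_self k))]

theorem Nat.cast_mul_choose_pred (n k : ℕ) :
    (n : R) * (n - 1).choose k = (k + 1) * n.choose (k + 1) := by
  cases n with
  | zero => simp
  | succ n =>
    have h := congrArg (Nat.cast (R := R)) (Nat.add_one_mul_choose_eq n k)
    push_cast at h
    simpa [mul_comm] using h

end Binomial

theorem poch_succ (α : ℝ) (k : ℕ) : poch α (k + 1) = poch α k * (α + k) :=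
  prod_range_succ _ _

theorem poch_ne_zero {α : ℝ} (hα : ∀ k : ℕ, α ≠ -(k : ℝ)) (k : ℕ) : poch α k ≠ 0 :=
  prod_ne_zero_iff.mpr fun i _ h => hα i (eq_neg_of_add_eq_zero_left h)

section DifferenceEquation

variable {R : Type*} [CommRing R] (α c : R)

theorem meixner_operator_choose_zero (x : ℕ) :
    c * (x + α) * (x + 1).choose 0 - (x + (x + α) * c) * x.choose 0 + x * (x - 1).choose 0
      = 0 := by
  simp only [Nat.choose_zero_right, Nat.cast_one]
  ring

theorem meixner_operator_choose_succ (x k : ℕ) :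
    c * (x + α) * (x + 1).choose (k + 1) - (x + (x + α) * c) * x.choose (k + 1)
        + x * (x - 1).choose (k + 1)
      = (c - 1) * (k + 1) * x.choose (k + 1) + c * (α + k) * x.choose k := by
  have pascal := congrArg (Nat.cast (R := R)) (Nat.choose_succ_succ' x k)
  have lower := Nat.cast_sub_mul_choose (R := R) x k
  have lower' := Nat.cast_sub_mul_choose (R := R) x (k + 1)
  have pred := Nat.cast_mul_choose_pred (R := R) x (k + 1)
  push_cast at pascal lower' pred
  rw [pascal, pred, ← lower']
  linear_combination c * lower

theorem meixner_difference_equation_of_recurrence (m : ℕ) (a : ℕ → R)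
    (ha : ∀ k < m, c * (α + k) * a (k + 1) = (c - 1) * (m - k) * a k) (x : ℕ) :
    (c - 1) * m * ∑ k ∈ range (m + 1), a k * x.choose k =
      c * (x + α) * ∑ k ∈ range (m + 1), a k * (x + 1).choose k
        - (x + (x + α) * c) * ∑ k ∈ range (m + 1), a k * x.choose k
        + x * ∑ k ∈ range (m + 1), a k * (x - 1).choose k := by
  have hlin : c * (x + α) * ∑ k ∈ range (m + 1), a k * (x + 1).choose k
        - (x + (x + α) * c) * ∑ k ∈ range (m + 1), a k * x.choose k
        + x * ∑ k ∈ range (m + 1), a k * (x - 1).choose k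
      = ∑ k ∈ range (m + 1), a k * (c * (x + α) * (x + 1).choose k
          - (x + (x + α) * c) * x.choose k + x * (x - 1).choose k) := by
    simp only [mul_sum, ← sum_sub_distrib, ← sum_add_distrib]
    exact sum_congr rfl fun k _ => by ring
  have hterm : ∀ k ∈ range m, a (k + 1) * (c * (x + α) * (x + 1).choose (k + 1)
        - (x + (x + α) * c) * x.choose (k + 1) + x * (x - 1).choose (k + 1))
      = (c - 1) * ((k + 1 : ℕ) * a (k + 1) * x.choose (k + 1))
        + (c - 1) * ((m - k) * a k * x.choose k) := by
    intro k hk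
    rw [meixner_operator_choose_succ]
    push_cast
    linear_combination (x.choose k : R) * ha k (mem_range.mp hk)
  have hshift : ∑ k ∈ range m, ((k + 1 : ℕ) : R) * a (k + 1) * x.choose (k + 1)
      = ∑ k ∈ range (m + 1), (k : R) * a k * x.choose k := by
    simp [sum_range_succ' (fun k => (k : R) * a k * x.choose k)]
  have hextend : ∑ k ∈ range m, ((m : R) - k) * a k * x.choose k
      = ∑ k ∈ range (m + 1), ((m : R) - k) * a k * x.choose k := by
    simp [sum_range_succ]
  rw [hlin]
  conv_rhs => rw [sum_range_succ', meixner_operator_choose_zero, mul_zero, add_zero]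
  rw [sum_congr rfl hterm, sum_add_distrib, ← mul_sum, ← mul_sum, hshift, hextend, ← mul_add,
    ← sum_add_distrib, mul_sum, mul_sum]
  exact sum_congr rfl fun k _ => by ring

end DifferenceEquation

noncomputable def meixnerCoeff (α c : ℝ) (m k : ℕ) : ℝ :=
  k.factorial / poch α k * m.choose k * (1 - 1 / c) ^ k

theorem Meixner_eq_sum_meixnerCoeff_mul_choose (m x : ℕ) (α c : ℝ) :
    Meixner m x α c = ∑ k ∈ range (m + 1), meixnerCoeff α c m k * x.choose k :=
  sum_congr rfl fun k _ => by unfold meixnerCoeff; ring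

theorem meixnerCoeff_succ {α c : ℝ} (hα : ∀ k : ℕ, α ≠ -(k : ℝ)) (hc : c ≠ 0) (m k : ℕ) :
    c * (α + k) * meixnerCoeff α c m (k + 1) = (c - 1) * (m - k) * meixnerCoeff α c m k := by
  have hαk : α + k ≠ 0 := fun h => hα k (eq_neg_of_add_eq_zero_left h)
  have hpoch := poch_ne_zero hα k
  have hb : c * (1 - 1 / c) = c - 1 := by field_simp
  have hcancel : (α + k) * ((k + 1) * k.factorial / (poch α k * (α + k)))
      = (k + 1) * (k.factorial / poch α k) := by field_simp
  have hm := Nat.cast_sub_mul_choose (R := ℝ) m k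
  unfold meixnerCoeff
  rw [poch_succ, Nat.factorial_succ, pow_succ]
  push_cast
  linear_combination (c * (1 - 1 / c) * (m.choose (k + 1)) * (1 - 1 / c) ^ k) * hcancel
    + ((k + 1) * (k.factorial / poch α k) * (m.choose (k + 1)) * (1 - 1 / c) ^ k) * hb
    - ((c - 1) * (k.factorial / poch α k) * (1 - 1 / c) ^ k) * hm

theorem meixner_difference_equation (α : ℝ) (hα : ∀ k : ℕ, α ≠ -(k : ℝ)) (c : ℝ)
    (hc : c ≠ 0) (m x : ℕ) :
    (c - 1) * m * Meixner m x α c =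
      c * (x + α) * Meixner m (x + 1) α c
        - ((x : ℝ) + ((x : ℝ) + α) * c) * Meixner m x α c
        + (x : ℝ) * Meixner m (x - 1) α c := by
  simp only [Meixner_eq_sum_meixnerCoeff_mul_choose]
  exact meixner_difference_equation_of_recurrence α c m (meixnerCoeff α c m)
    (fun k _ => meixnerCoeff_succ hα hc m k) x
end

section
/- For all nonnegative integers m and x, the Charlier polynomial satisfies the difference equation −m·C_m(x; a) = a·C_m(x+1; a) − (x+a)·C_m(x; a) + x·C_m(x−1; a), where the last term is interpreted as 0 when x = 0. -/
/-!
The forward difference in `x` lowers `C(x, k)` to `C(x, k - 1)`; multiplying by `a` and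
re-indexing turns the `k`-th term of `a Δ C_m` into `-(m - k)` times the `k`-th term of `C_m`,
because `(k + 1) C(m, k + 1) = (m - k) C(m, k)` and `a (-1/a) = -1`. The backward difference
weighted by `x` multiplies the `k`-th term by `-k`, because `x C(x - 1, k) = (x - k) C(x, k)`.
The two weights add up to `-m`.
-/

open Finset

lemma cast_choose_succ_mul {R : Type*} [CommRing R] (n k : ℕ) :
    (n.choose (k + 1) : R) * (k + 1) = n.choose k * (n - k) := by
  rcases le_or_gt k n with hk | hk
  · exact_mod_cast congrArg (Nat.cast : ℕ → R) (Nat.choose_succ_right_eq n k)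
  · simp [Nat.choose_eq_zero_of_lt hk, Nat.choose_eq_zero_of_lt (hk.trans k.lt_succ_self)]

lemma cast_mul_choose_pred {R : Type*} [CommRing R] (x k : ℕ) :
    (x : R) * (x - 1).choose k = (x - k) * x.choose k := by
  rcases x with _ | y
  · cases k <;> simp
  rcases le_or_gt k (y + 1) with hk | hk
  · have h := congrArg (Nat.cast : ℕ → R) (Nat.choose_mul_succ_eq y k)
    push_cast [Nat.cast_sub hk] at h
    simpa [mul_comm] using h
  · simp [Nat.choose_eq_zero_of_lt hk, Nat.choose_eq_zero_of_lt (y.lt_succ_self.trans hk)]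

noncomputable def charlierTerm (m x : ℕ) (a : ℝ) (k : ℕ) : ℝ :=
  (k.factorial : ℝ) * (m.choose k) * (x.choose k) * (-1 / a) ^ k

lemma charlier_eq_sum_charlierTerm (m x : ℕ) (a : ℝ) :
    Charlier m x a = ∑ k ∈ range (m + 1), charlierTerm m x a k :=
  rfl

lemma charlier_succ_sub (m x : ℕ) (a : ℝ) :
    Charlier m (x + 1) a - Charlier m x a =
      ∑ k ∈ range m,
        ((k + 1).factorial : ℝ) * m.choose (k + 1) * x.choose k * (-1 / a) ^ (k + 1) := by
  rw [Charlier, Charlier, ← sum_sub_distrib, sum_range_succ']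
  simp only [Nat.choose_succ_succ', Nat.cast_add, Nat.choose_zero_right, sub_self, add_zero]
  exact sum_congr rfl fun k _ => by ring

lemma mul_charlier_succ_sub {a : ℝ} (ha : a ≠ 0) (m x : ℕ) :
    a * (Charlier m (x + 1) a - Charlier m x a) =
      -∑ k ∈ range (m + 1), ((m : ℝ) - k) * charlierTerm m x a k := by
  rw [charlier_succ_sub, sum_range_succ, sub_self, zero_mul, add_zero, mul_sum, ← sum_neg_distrib]
  refine sum_congr rfl fun k _ => ?_
  have hinv : a * (-1 / a) = -1 := by field_simp
  rw [charlierTerm, Nat.factorial_succ, Nat.cast_mul, pow_succ]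
  push_cast
  linear_combination (k.factorial * x.choose k * (-1 / a) ^ k : ℝ) *
    ((m.choose (k + 1) * (k + 1) : ℝ) * hinv - cast_choose_succ_mul (R := ℝ) m k)

lemma natCast_mul_charlier_pred_sub (m x : ℕ) (a : ℝ) :
    (x : ℝ) * (Charlier m (x - 1) a - Charlier m x a) =
      -∑ k ∈ range (m + 1), (k : ℝ) * charlierTerm m x a k := by
  rw [Charlier, Charlier, ← sum_sub_distrib, mul_sum, ← sum_neg_distrib]
  refine sum_congr rfl fun k _ => ?_
  rw [charlierTerm]
  linear_combination
    (k.factorial * m.choose k * (-1 / a) ^ k : ℝ) * cast_mul_choose_pred (R := ℝ) x k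

theorem charlier_difference_equation (a : ℝ) (ha : a ≠ 0) (m x : ℕ) :
    -(m : ℝ) * Charlier m x a =
      a * Charlier m (x + 1) a - ((x : ℝ) + a) * Charlier m x a
        + (x : ℝ) * Charlier m (x - 1) a := by
  have hweights : ∑ k ∈ range (m + 1), ((m : ℝ) - k) * charlierTerm m x a k
      + ∑ k ∈ range (m + 1), (k : ℝ) * charlierTerm m x a k = m * Charlier m x a := by
    rw [charlier_eq_sum_charlierTerm, mul_sum, ← sum_add_distrib]
    exact sum_congr rfl fun k _ => by ring
  linear_combination
    hweights - mul_charlier_succ_sub ha m x - natCast_mul_charlier_pred_sub m x a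
end

section
/- For all nonzero a and all z, w ∈ ℂ, Σ_{x,m≥0} (1/m!)·C_m(x; a)·z^m · (1/x!)·w^x = e^{w+z−wz/a}, where the double series converges absolutely. -/
open Complex

/-- Auxiliary: the triple exponential series term. -/
noncomputable def charlierF (a z w : ℂ) (p : ℕ × ℕ × ℕ) : ℂ :=
  z ^ p.1 / p.1.factorial *
    ((w ^ p.2.1 / p.2.1.factorial) * ((-(w * z) / a) ^ p.2.2 / p.2.2.factorial))

/-- Auxiliary: the reindexed series term. -/
noncomputable def charlierG (a z w : ℂ) (p : (ℕ × ℕ) × ℕ) : ℂ :=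
  if p.2 ≤ p.1.1 ∧ p.2 ≤ p.1.2 then
    z ^ (p.1.1 - p.2) / (p.1.1 - p.2).factorial *
      ((w ^ (p.1.2 - p.2) / (p.1.2 - p.2).factorial) *
        ((-(w * z) / a) ^ p.2 / p.2.factorial))
  else 0

lemma charlier_exp_hasSum (u : ℂ) :
    HasSum (fun n : ℕ => u ^ n / n.factorial) (Complex.exp u) := by
  simpa [Complex.exp_eq_exp_ℂ] using NormedSpace.expSeries_div_hasSum_exp u

lemma charlier_exp_summable_norm (u : ℂ) :
    Summable (fun n : ℕ => ‖u ^ n / (n.factorial : ℂ)‖) := by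
  have : Summable (fun n : ℕ => ‖u‖ ^ n / (n.factorial : ℝ)) :=
    (Real.exp_eq_exp_ℝ ▸ NormedSpace.expSeries_div_hasSum_exp ‖u‖).summable
  apply this.congr
  intro n
  simp [norm_div, norm_pow, Complex.norm_natCast]

lemma charlier_pair_summable_norm (a z w : ℂ) :
    Summable (fun p : ℕ × ℕ =>
      ‖(w ^ p.1 / (p.1.factorial : ℂ)) * ((-(w * z) / a) ^ p.2 / p.2.factorial)‖) :=
  Summable.mul_norm (f := fun n : ℕ => w ^ n / (n.factorial : ℂ))
    (g := fun n : ℕ => (-(w * z) / a) ^ n / (n.factorial : ℂ))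
    (charlier_exp_summable_norm w) (charlier_exp_summable_norm _)

lemma charlierF_summable_norm (a z w : ℂ) :
    Summable (fun p : ℕ × ℕ × ℕ => ‖charlierF a z w p‖) :=
  Summable.mul_norm (f := fun n : ℕ => z ^ n / (n.factorial : ℂ))
    (g := fun p : ℕ × ℕ => (w ^ p.1 / (p.1.factorial : ℂ)) * ((-(w * z) / a) ^ p.2 / p.2.factorial))
    (charlier_exp_summable_norm z) (charlier_pair_summable_norm a z w)

lemma charlierF_hasSum (a z w : ℂ) :
    HasSum (charlierF a z w) (Complex.exp (w + z - w * z / a)) := by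
  have h1 : HasSum (fun p : ℕ × ℕ =>
      (w ^ p.1 / (p.1.factorial : ℂ)) * ((-(w * z) / a) ^ p.2 / p.2.factorial))
      (Complex.exp w * Complex.exp (-(w * z) / a)) :=
    HasSum.mul (f := fun n : ℕ => w ^ n / (n.factorial : ℂ))
      (g := fun n : ℕ => (-(w * z) / a) ^ n / (n.factorial : ℂ))
      (charlier_exp_hasSum w) (charlier_exp_hasSum _)
      (charlier_pair_summable_norm a z w).of_norm
  have h2 : HasSum (charlierF a z w)
      (Complex.exp z * (Complex.exp w * Complex.exp (-(w * z) / a))) :=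
    HasSum.mul (f := fun n : ℕ => z ^ n / (n.factorial : ℂ))
      (g := fun p : ℕ × ℕ =>
        (w ^ p.1 / (p.1.factorial : ℂ)) * ((-(w * z) / a) ^ p.2 / p.2.factorial))
      (charlier_exp_hasSum z) h1 (charlierF_summable_norm a z w).of_norm
  have : Complex.exp z * (Complex.exp w * Complex.exp (-(w * z) / a))
      = Complex.exp (w + z - w * z / a) := by
    rw [← Complex.exp_add, ← Complex.exp_add]
    congr 1
    ring
  rwa [this] at h2

/-- the reindexing map -/
def charlierE (p : ℕ × ℕ × ℕ) : (ℕ × ℕ) × ℕ := ((p.1 + p.2.2, p.2.1 + p.2.2), p.2.2)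

lemma charlierE_inj : Function.Injective charlierE := by
  rintro ⟨i, j, k⟩ ⟨i', j', k'⟩ h
  simp only [charlierE, Prod.mk.injEq] at h
  obtain ⟨⟨h1, h2⟩, h3⟩ := h
  simp only [Prod.mk.injEq]
  omega

lemma charlierG_comp_e (a z w : ℂ) (p : ℕ × ℕ × ℕ) :
    charlierG a z w (charlierE p) = charlierF a z w p := by
  obtain ⟨i, j, k⟩ := p
  simp [charlierG, charlierE, charlierF]

lemma charlierG_eq_zero (a z w : ℂ) (q : (ℕ × ℕ) × ℕ) (hq : q ∉ Set.range charlierE) :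
    charlierG a z w q = 0 := by
  obtain ⟨⟨m, x⟩, k⟩ := q
  by_contra h
  apply hq
  have hcond : k ≤ m ∧ k ≤ x := by
    by_contra hc'
    exact h (by simp [charlierG, hc'])
  exact ⟨(m - k, x - k, k), by
    simp [charlierE, Nat.sub_add_cancel hcond.1, Nat.sub_add_cancel hcond.2]⟩

lemma charlierG_hasSum (a z w : ℂ) :
    HasSum (charlierG a z w) (Complex.exp (w + z - w * z / a)) := by
  have hcomp : (charlierG a z w) ∘ charlierE = charlierF a z w :=
    funext (charlierG_comp_e a z w)
  exact (charlierE_inj.hasSum_iff (charlierG_eq_zero a z w)).mp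
    (hcomp ▸ charlierF_hasSum a z w)

lemma charlierG_summable_norm (a z w : ℂ) :
    Summable (fun q => ‖charlierG a z w q‖) := by
  rw [← Function.Injective.summable_iff charlierE_inj
    (by intro q hq; simp [charlierG_eq_zero a z w q hq])]
  exact (charlierF_summable_norm a z w).congr
    (fun p => by rw [Function.comp_apply, charlierG_comp_e])

lemma charlier_fiber_hasSum (a z w : ℂ) (q : ℕ × ℕ) :
    HasSum (fun k => charlierG a z w (q, k))
      ((1 / (q.1.factorial : ℂ)) * CharlierC q.1 q.2 a * z ^ q.1 *
        (1 / (q.2.factorial : ℂ)) * w ^ q.2) := by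
  obtain ⟨m, x⟩ := q
  have h0 : ∀ k ∉ Finset.range (m + 1), charlierG a z w ((m, x), k) = 0 := by
    intro k hk
    simp only [Finset.mem_range, not_lt] at hk
    have : ¬ (k ≤ m ∧ k ≤ x) := by omega
    simp [charlierG, this]
  have := hasSum_sum_of_ne_finset_zero (L := SummationFilter.unconditional ℕ) h0
  convert this using 1
  rw [CharlierC]
  simp only [Finset.mul_sum, Finset.sum_mul]
  apply Finset.sum_congr rfl
  intro k hk
  simp only [Finset.mem_range, Nat.lt_succ_iff] at hk
  by_cases hkx : k ≤ x
  · simp only [charlierG, if_pos (⟨hk, hkx⟩ : k ≤ m ∧ k ≤ x)]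
    have hm : (m.choose k : ℂ) * k.factorial * (m - k).factorial = m.factorial := by
      exact_mod_cast congrArg (Nat.cast : ℕ → ℂ) (Nat.choose_mul_factorial_mul_factorial hk)
    have hx : (x.choose k : ℂ) * k.factorial * (x - k).factorial = x.factorial := by
      exact_mod_cast congrArg (Nat.cast : ℕ → ℂ) (Nat.choose_mul_factorial_mul_factorial hkx)
    have hzm : z ^ m = z ^ (m - k) * z ^ k := by
      rw [← pow_add]; congr 1; omega
    have hwx : w ^ x = w ^ (x - k) * w ^ k := by
      rw [← pow_add]; congr 1; omega
    have hck : (-(w * z) / a) ^ k = (-1 / a) ^ k * w ^ k * z ^ k := by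
      rw [← mul_pow, ← mul_pow]; congr 1; ring
    have hmf : ((m.factorial : ℂ)) ≠ 0 := Nat.cast_ne_zero.mpr m.factorial_ne_zero
    have hxf : ((x.factorial : ℂ)) ≠ 0 := Nat.cast_ne_zero.mpr x.factorial_ne_zero
    have hkf : ((k.factorial : ℂ)) ≠ 0 := Nat.cast_ne_zero.mpr k.factorial_ne_zero
    have hmkf : (((m - k).factorial : ℂ)) ≠ 0 := Nat.cast_ne_zero.mpr (m - k).factorial_ne_zero
    have hxkf : (((x - k).factorial : ℂ)) ≠ 0 := Nat.cast_ne_zero.mpr (x - k).factorial_ne_zero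
    have key : ((m.choose k : ℂ) * k.factorial * (m - k).factorial) *
        ((x.choose k : ℂ) * k.factorial * (x - k).factorial)
        = (m.factorial : ℂ) * x.factorial := by rw [hm, hx]
    rw [hzm, hwx, hck]
    generalize ((-1 : ℂ) / a) ^ k = t
    field_simp
    ring_nf
    ring_nf at key
    linear_combination (z ^ (m - k) * z ^ k * w ^ (x - k) * w ^ k * t) * key
  · have : ¬ (k ≤ m ∧ k ≤ x) := by omega
    simp [charlierG, this, Nat.choose_eq_zero_of_lt (by omega : x < k)]

theorem charlier_master_generating_function (a : ℂ) (ha : a ≠ 0) (z w : ℂ) :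
    HasSum (fun q : ℕ × ℕ =>
        (1 / (q.1.factorial : ℂ)) * CharlierC q.1 q.2 a * z ^ q.1 *
          (1 / (q.2.factorial : ℂ)) * w ^ q.2)
      (Complex.exp (w + z - w * z / a)) ∧
    Summable (fun q : ℕ × ℕ =>
      ‖(1 / (q.1.factorial : ℂ)) * CharlierC q.1 q.2 a * z ^ q.1 *
        (1 / (q.2.factorial : ℂ)) * w ^ q.2‖) := by
  refine ⟨(charlierG_hasSum a z w).prod_fiberwise (charlier_fiber_hasSum a z w), ?_⟩
  have hGnorm := charlierG_summable_norm a z w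
  have hfibernorm : ∀ q : ℕ × ℕ, Summable (fun k => ‖charlierG a z w (q, k)‖) :=
    fun q => hGnorm.comp_injective (i := fun k : ℕ => (q, k))
      (fun k k' h => by simpa using h)
  apply Summable.of_nonneg_of_le (fun q => norm_nonneg _) (fun q => ?_)
    (hGnorm.hasSum.prod_fiberwise (fun q => (hfibernorm q).hasSum)).summable
  calc ‖(1 / (q.1.factorial : ℂ)) * CharlierC q.1 q.2 a * z ^ q.1 *
        (1 / (q.2.factorial : ℂ)) * w ^ q.2‖
      = ‖∑' k, charlierG a z w (q, k)‖ := by rw [(charlier_fiber_hasSum a z w q).tsum_eq]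
    _ ≤ ∑' k, ‖charlierG a z w (q, k)‖ := norm_tsum_le_tsum_norm (hfibernorm q)
end
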